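/- arXiv:2007.13474 — 2 statements merged into one kernel-verified Lean document; each statement's English description precedes it below -/
import Mathlib

section
/- Let Ψ_0 : (0,∞) → (0,∞) be a concave index function (continuous, strictly increasing, Ψ_0(δ) → 0 as δ → 0⁺), and let A, B > 0, κ > 0, η > 0 be constants. Then the function Ψ(δ) := inf_{λ ≥ 1} [A·2^{-λκ} + B·2^{(λ+1)η} Ψ_0(δ)] is concave, continuous, and strictly increasing on (0,∞) with Ψ(δ) → 0 as δ → 0⁺, i.e., Ψ is a concave index function. -/
open Set Filter Topology

/-!
Ψ is the lower envelope of the affine images `a_λ + b_λ Ψ₀` of `Ψ₀`, with `a_λ = A 2^{-λκ} > 0`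
and `b_λ = B 2^{(λ+1)η} ≥ B 4^η > 0`. An infimum of concave functions is concave, and concavity on
an open interval gives continuity. Since every slope `b_λ` is at least `c = B 4^η`, the envelope
inherits from `Ψ₀` the lower bound `Ψ ≥ c Ψ₀` and the increment bound `Ψ y - Ψ x ≥ c (Ψ₀ y - Ψ₀ x)`,
which give positivity and strict monotonicity. Finally `Ψ(δ) ≤ a_λ + b_λ Ψ₀(δ) → a_λ` as `δ → 0⁺`,
and `a_λ → 0` as `λ → ∞`.
-/

theorem ConcaveOn.ciInf {E ι : Type*} [AddCommMonoid E] [Module ℝ E] [Nonempty ι] {s : Set E}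
    {f : ι → E → ℝ} (hf : ∀ i, ConcaveOn ℝ s (f i))
    (hbdd : ∀ x ∈ s, BddBelow (range fun i => f i x)) :
    ConcaveOn ℝ s fun x => ⨅ i, f i x := by
  refine ⟨(hf (Classical.arbitrary ι)).1, fun x hx y hy a b ha hb hab => le_ciInf fun i => ?_⟩
  calc a • (⨅ j, f j x) + b • (⨅ j, f j y)
      ≤ a • f i x + b • f i y := by
        gcongr
        exacts [ciInf_le (hbdd x hx) i, ciInf_le (hbdd y hy) i]
    _ ≤ f i (a • x + b • y) := (hf i).2 hx hy ha hb hab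

section AffineEnvelope

variable {α ι : Type*} {a b : ι → ℝ} {c t : ℝ}

theorem mul_le_affine (ha : ∀ i, 0 ≤ a i) (hb : ∀ i, c ≤ b i) (ht : 0 ≤ t) (i : ι) :
    c * t ≤ a i + b i * t := by
  nlinarith [ha i, hb i]

theorem bddBelow_range_affine (ha : ∀ i, 0 ≤ a i) (hb : ∀ i, c ≤ b i) (ht : 0 ≤ t) :
    BddBelow (range fun i => a i + b i * t) :=
  ⟨c * t, by rintro _ ⟨i, rfl⟩; exact mul_le_affine ha hb ht i⟩

theorem mul_le_iInf_affine [Nonempty ι] (ha : ∀ i, 0 ≤ a i) (hb : ∀ i, c ≤ b i) (ht : 0 ≤ t) :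
    c * t ≤ ⨅ i, a i + b i * t :=
  le_ciInf (mul_le_affine ha hb ht)

theorem iInf_affine_add_mul_sub_le [Nonempty ι] (ha : ∀ i, 0 ≤ a i) (hb : ∀ i, c ≤ b i) {s : ℝ}
    (hs : 0 ≤ s) (hst : s ≤ t) :
    (⨅ i, a i + b i * s) + c * (t - s) ≤ ⨅ i, a i + b i * t := by
  refine le_ciInf fun i => ?_
  calc (⨅ j, a j + b j * s) + c * (t - s)
      ≤ a i + b i * s + b i * (t - s) := by
        gcongr
        exacts [ciInf_le (bddBelow_range_affine ha hb hs) i, hb i]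
    _ = a i + b i * t := by ring

variable {g : α → ℝ}

theorem StrictMonoOn.iInf_affine [Preorder α] [Nonempty ι] {s : Set α} (ha : ∀ i, 0 ≤ a i)
    (hb : ∀ i, c ≤ b i) (hc : 0 < c) (hg : StrictMonoOn g s) (hg0 : ∀ x ∈ s, 0 ≤ g x) :
    StrictMonoOn (fun x => ⨅ i, a i + b i * g x) s := by
  intro x hx y hy hxy
  have hgxy := hg hx hy hxy
  exact (lt_add_of_pos_right _ (mul_pos hc (sub_pos.2 hgxy))).trans_le
    (iInf_affine_add_mul_sub_le ha hb (hg0 x hx) hgxy.le)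

theorem ConcaveOn.iInf_affine [AddCommMonoid α] [Module ℝ α] [Nonempty ι] {s : Set α}
    (ha : ∀ i, 0 ≤ a i) (hb : ∀ i, 0 ≤ b i) (hg : ConcaveOn ℝ s g) (hg0 : ∀ x ∈ s, 0 ≤ g x) :
    ConcaveOn ℝ s fun x => ⨅ i, a i + b i * g x :=
  ConcaveOn.ciInf (fun i => (concaveOn_const (a i) hg.1).add (hg.smul (hb i)))
    fun x hx => bddBelow_range_affine ha hb (hg0 x hx)

theorem tendsto_iInf_affine_zero {l : Filter α} (ha : ∀ i, 0 ≤ a i) (hb : ∀ i, 0 ≤ b i)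
    (ha0 : ∀ ε > 0, ∃ i, a i < ε) (hg : Tendsto g l (𝓝 0)) (hg0 : ∀ᶠ x in l, 0 ≤ g x) :
    Tendsto (fun x => ⨅ i, a i + b i * g x) l (𝓝 0) := by
  have : Nonempty ι := let ⟨i, _⟩ := ha0 1 one_pos; ⟨i⟩
  refine tendsto_order.2 ⟨fun ε hε => ?_, fun ε hε => ?_⟩
  · filter_upwards [hg0] with x hx
    have := mul_le_iInf_affine ha hb hx
    linarith
  · obtain ⟨i, hi⟩ := ha0 ε hε
    have hlim : Tendsto (fun x => a i + b i * g x) l (𝓝 (a i)) := by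
      simpa using tendsto_const_nhds.add (hg.const_mul (b i))
    filter_upwards [hlim.eventually_lt_const hi, hg0] with x hx hx0
    exact (ciInf_le (bddBelow_range_affine ha hb hx0) i).trans_lt hx

end AffineEnvelope

theorem tendsto_const_mul_rpow_neg_mul_atTop {β : ℝ} (hβ : 1 < β) (A : ℝ) {κ : ℝ} (hκ : 0 < κ) :
    Tendsto (fun l : ℝ => A * β ^ (-l * κ)) atTop (𝓝 0) := by
  have hexp : Tendsto (fun l : ℝ => -l * κ) atTop atBot :=
    tendsto_neg_atTop_atBot.atBot_mul_const hκ
  simpa using ((tendsto_rpow_atBot_of_base_gt_one β hβ).comp hexp).const_mul A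

theorem inf_family_is_concave_index_function_general
    (Ψ₀ : ℝ → ℝ)
    (hpos : ∀ δ ∈ Ioi (0 : ℝ), 0 < Ψ₀ δ)
    (hconc : ConcaveOn ℝ (Ioi 0) Ψ₀)
    (hmono : StrictMonoOn Ψ₀ (Ioi 0))
    (hlim : Filter.Tendsto Ψ₀ (nhdsWithin 0 (Ioi 0)) (nhds 0))
    (A B κ η : ℝ) (hA : 0 < A) (hB : 0 < B) (hκ : 0 < κ) (hη : 0 < η)
    (Ψ : ℝ → ℝ)
    (hΨ : Ψ = fun δ => ⨅ l : Ici (1 : ℝ),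
      (A * (2 : ℝ) ^ (-(l : ℝ) * κ) + B * (2 : ℝ) ^ (((l : ℝ) + 1) * η) * Ψ₀ δ)) :
    (∀ δ ∈ Ioi (0 : ℝ), 0 < Ψ δ) ∧
    ConcaveOn ℝ (Ioi 0) Ψ ∧
    ContinuousOn Ψ (Ioi 0) ∧
    StrictMonoOn Ψ (Ioi 0) ∧
    Filter.Tendsto Ψ (nhdsWithin 0 (Ioi 0)) (nhds 0) := by
  subst hΨ
  have ha (l : Ici (1 : ℝ)) : 0 ≤ A * (2 : ℝ) ^ (-(l : ℝ) * κ) := by positivity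
  have hb0 (l : Ici (1 : ℝ)) : 0 ≤ B * (2 : ℝ) ^ (((l : ℝ) + 1) * η) := by positivity
  have hb (l : Ici (1 : ℝ)) : B * (2 : ℝ) ^ (2 * η) ≤ B * (2 : ℝ) ^ (((l : ℝ) + 1) * η) := by
    have : (2 : ℝ) ≤ l + 1 := by linarith [l.2.out]
    gcongr; norm_num
  have hc : 0 < B * (2 : ℝ) ^ (2 * η) := by positivity
  have hΨ₀0 δ (hδ : δ ∈ Ioi (0 : ℝ)) : 0 ≤ Ψ₀ δ := (hpos δ hδ).le
  have hconcΨ := hconc.iInf_affine ha hb0 hΨ₀0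
  refine ⟨fun δ hδ => ?_, hconcΨ, hconcΨ.continuousOn isOpen_Ioi,
    hmono.iInf_affine ha hb hc hΨ₀0, tendsto_iInf_affine_zero ha hb0 (fun ε hε => ?_) hlim
      (eventually_nhdsWithin_of_forall hΨ₀0)⟩
  · exact (mul_pos hc (hpos δ hδ)).trans_le (mul_le_iInf_affine ha hb (hΨ₀0 δ hδ))
  · obtain ⟨l, hlε, hl1⟩ := (((tendsto_const_mul_rpow_neg_mul_atTop one_lt_two A hκ).eventually
      (gt_mem_nhds hε)).and (eventually_ge_atTop 1)).exists
    exact ⟨⟨l, hl1⟩, hlε⟩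

/-- If `Ψ₀ : (0,∞) → (0,∞)` is a concave index function (continuous, strictly increasing,
`Ψ₀(δ) → 0` as `δ → 0⁺`) and `A, B, κ, η > 0`, then
`Ψ(δ) = inf_{λ ≥ 1} [A 2^{-λκ} + B 2^{(λ+1)η} Ψ₀(δ)]` is again a concave index function:
positive on `(0,∞)`, concave, continuous, strictly increasing, with `Ψ(δ) → 0` as `δ → 0⁺`. -/
theorem inf_family_is_concave_index_function
    (Ψ₀ : ℝ → ℝ)
    (hpos : ∀ δ ∈ Ioi (0 : ℝ), 0 < Ψ₀ δ)
    (hconc : ConcaveOn ℝ (Ioi 0) Ψ₀)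
    (hcont : ContinuousOn Ψ₀ (Ioi 0))
    (hmono : StrictMonoOn Ψ₀ (Ioi 0))
    (hlim : Filter.Tendsto Ψ₀ (nhdsWithin 0 (Ioi 0)) (nhds 0))
    (A B κ η : ℝ) (hA : 0 < A) (hB : 0 < B) (hκ : 0 < κ) (hη : 0 < η)
    (Ψ : ℝ → ℝ)
    (hΨ : Ψ = fun δ => ⨅ l : Ici (1 : ℝ),
      (A * (2 : ℝ) ^ (-(l : ℝ) * κ) + B * (2 : ℝ) ^ (((l : ℝ) + 1) * η) * Ψ₀ δ)) :
    (∀ δ ∈ Ioi (0 : ℝ), 0 < Ψ δ) ∧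
    ConcaveOn ℝ (Ioi 0) Ψ ∧
    ContinuousOn Ψ (Ioi 0) ∧
    StrictMonoOn Ψ (Ioi 0) ∧
    Filter.Tendsto Ψ (nhdsWithin 0 (Ioi 0)) (nhds 0) :=
  inf_family_is_concave_index_function_general Ψ₀ hpos hconc hmono hlim A B κ η hA hB hκ hη Ψ hΨ
end

section
/- Suppose T : D(T) ⊂ L^p(Ω,μ) → Y satisfies, for all x ∈ D(T), the variational source condition ⟨x† − x, J_{p̂}(x† − x*)⟩ ≤ ((c_p − β)/p̂)‖x − x†‖_p^{p̂} + Ψ(‖T(x) − T(x†)‖_Y), where c_p is the uniform convexity constant of L^p and β ∈ (0, c_p). Then for all x ∈ D(T): (β/p̂)‖x† − x‖_p^{p̂} ≤ (1/p̂)‖x − x*‖_p^{p̂} − (1/p̂)‖x† − x*‖_p^{p̂} + Ψ(‖T(x) − T(x†)‖_Y). -/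
open MeasureTheory ENNReal

/-- If the forward operator `T : D(T) ⊂ L^p(Ω,μ) → Y` satisfies the variational source
condition `⟨x† − x, J_p̂(x† − x*)⟩ ≤ ((c_p − β)/p̂)‖x − x†‖^p̂ + Ψ(‖T x − T x†‖)` on `D(T)`,
where `c_p` is the `p̂`-uniform convexity constant of `L^p` and `β ∈ (0, c_p)`, then
`(β/p̂)‖x† − x‖^p̂ ≤ (1/p̂)‖x − x*‖^p̂ − (1/p̂)‖x† − x*‖^p̂ + Ψ(‖T x − T x†‖)` on `D(T)`. -/
theorem vsc_implies_variational_inequality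
    {Ω : Type*} [MeasurableSpace Ω] (μ : Measure Ω) [SigmaFinite μ]
    (p : ℝ) (hp : 1 < p) [Fact (1 ≤ ENNReal.ofReal p)]
    {Y : Type*} [NormedAddCommGroup Y]
    (D : Set (Lp ℝ (ENNReal.ofReal p) μ))
    (T : Lp ℝ (ENNReal.ofReal p) μ → Y)
    (J : Lp ℝ (ENNReal.ofReal p) μ → Ω → ℝ)
    (c_p β : ℝ) (hc : 0 < c_p) (hβ0 : 0 < β) (hβc : β < c_p)
    (Ψ : ℝ → ℝ)
    (huc : ∀ w y : Lp ℝ (ENNReal.ofReal p) μ,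
      ‖w + y‖ ^ (max p 2) ≥ ‖w‖ ^ (max p 2)
        + (max p 2) * (∫ x, (y : Ω → ℝ) x * J w x ∂μ)
        + c_p * ‖y‖ ^ (max p 2))
    (hJid : ∀ w : Lp ℝ (ENNReal.ofReal p) μ,
      (∫ x, (w : Ω → ℝ) x * J w x ∂μ) = ‖w‖ ^ (max p 2))
    (xdag xstar : Lp ℝ (ENNReal.ofReal p) μ) (hxdag : xdag ∈ D)
    (hVSC : ∀ x ∈ D,
      (∫ x', ((xdag - x : Lp ℝ (ENNReal.ofReal p) μ) : Ω → ℝ) x' * J (xdag - xstar) x' ∂μ)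
        ≤ (c_p - β) / (max p 2) * ‖x - xdag‖ ^ (max p 2) + Ψ ‖T x - T xdag‖) :
    ∀ x ∈ D,
      β / (max p 2) * ‖xdag - x‖ ^ (max p 2) ≤
        (1 / (max p 2)) * ‖x - xstar‖ ^ (max p 2)
          - (1 / (max p 2)) * ‖xdag - xstar‖ ^ (max p 2)
          + Ψ ‖T x - T xdag‖ := by
  intro x hx
  set m : ℝ := max p 2 with hm
  have hm2 : (2:ℝ) ≤ m := le_max_right _ _
  have hmpos : (0:ℝ) < m := by linarith
  have huc1 := huc (xdag - xstar) (x - xdag)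
  have hsum : xdag - xstar + (x - xdag) = x - xstar := by abel
  rw [hsum] at huc1
  -- relate the two integrals
  have hneg : (xdag - x : Lp ℝ (ENNReal.ofReal p) μ) = -(x - xdag) := by abel
  have hint : (∫ x', ((xdag - x : Lp ℝ (ENNReal.ofReal p) μ) : Ω → ℝ) x' * J (xdag - xstar) x' ∂μ)
      = - ∫ x', ((x - xdag : Lp ℝ (ENNReal.ofReal p) μ) : Ω → ℝ) x' * J (xdag - xstar) x' ∂μ := by
    rw [← integral_neg]
    apply integral_congr_ae
    have h1 : ((xdag - x : Lp ℝ (ENNReal.ofReal p) μ) : Ω → ℝ)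
        =ᵐ[μ] fun x' => -(((x - xdag : Lp ℝ (ENNReal.ofReal p) μ) : Ω → ℝ) x') := by
      rw [hneg]; exact Lp.coeFn_neg _
    filter_upwards [h1] with a ha
    rw [ha]; ring
  have hVSC1 := hVSC x hx
  rw [hint] at hVSC1
  have hge : - ((c_p - β) / m * ‖x - xdag‖ ^ m + Ψ ‖T x - T xdag‖)
      ≤ ∫ x', ((x - xdag : Lp ℝ (ENNReal.ofReal p) μ) : Ω → ℝ) x' * J (xdag - xstar) x' ∂μ := by
    linarith
  have hnn : ‖x - xdag‖ ^ m = ‖xdag - x‖ ^ m := by rw [norm_sub_rev]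
  have key : ‖x - xstar‖ ^ m ≥ ‖xdag - xstar‖ ^ m
      + m * (- ((c_p - β) / m * ‖x - xdag‖ ^ m + Ψ ‖T x - T xdag‖))
      + c_p * ‖x - xdag‖ ^ m := by
    calc ‖x - xstar‖ ^ m ≥ ‖xdag - xstar‖ ^ m
        + m * (∫ x', ((x - xdag : Lp ℝ (ENNReal.ofReal p) μ) : Ω → ℝ) x' * J (xdag - xstar) x' ∂μ)
        + c_p * ‖x - xdag‖ ^ m := huc1
      _ ≥ _ := by nlinarith [hge, hmpos]
  have hfield : m * (- ((c_p - β) / m * ‖x - xdag‖ ^ m + Ψ ‖T x - T xdag‖))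
      = -(c_p - β) * ‖x - xdag‖ ^ m - m * Ψ ‖T x - T xdag‖ := by
    field_simp; ring
  rw [hfield] at key
  rw [div_mul_eq_mul_div, div_le_iff₀ hmpos, ← hnn]
  have hexp : (1 / m * ‖x - xstar‖ ^ m - 1 / m * ‖xdag - xstar‖ ^ m + Ψ ‖T x - T xdag‖) * m
      = ‖x - xstar‖ ^ m - ‖xdag - xstar‖ ^ m + m * Ψ ‖T x - T xdag‖ := by
    field_simp
  rw [hexp]
  linarith [key]
end
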